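/- Let S and T be Hermitian n×n complex matrices with S ≤ T in the Loewner order (i.e. T − S is positive semidefinite). Then for every λ ∈ ℝ, the number of eigenvalues of T strictly below λ is at most the number of eigenvalues of S strictly below λ: N(T,λ) ≤ N(S,λ). -/

import Mathlib

/-!
Let `V` be the span of the eigenvectors of `T` with eigenvalue `< λ`, so `dim V = N(T,λ)`.
For nonzero `x ∈ V`, `Re ⟪x, S x⟫ ≤ Re ⟪x, T x⟫ < λ ‖x‖²`, whereas `Re ⟪x, S x⟫ ≥ λ ‖x‖²` on the
span of the eigenvectors of `S` with eigenvalue `≥ λ`, which has dimension `n - N(S,λ)`. The two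
subspaces therefore intersect trivially, so `N(T,λ) + (n - N(S,λ)) ≤ n`.
-/

open scoped ComplexOrder

noncomputable section

open Module Submodule
open scoped InnerProductSpace

namespace OrthonormalBasis

variable {ι 𝕜 E : Type*} [Fintype ι] [RCLike 𝕜] [NormedAddCommGroup E]
  [InnerProductSpace 𝕜 E]

theorem repr_eq_zero_of_mem_span_image (b : OrthonormalBasis ι 𝕜 E) {s : Set ι} {x : E}
    (hx : x ∈ span 𝕜 (b '' s)) {i : ι} (hi : i ∉ s) : b.repr x i = 0 := by
  have hspan : span 𝕜 (b '' s) ≤ LinearMap.ker (innerₛₗ 𝕜 (b i)) := span_le.2 <| by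
    rintro _ ⟨j, hj, rfl⟩
    exact b.orthonormal.2 (ne_of_mem_of_not_mem hj hi).symm
  simpa [b.repr_apply_apply] using hspan hx

theorem sum_sq_norm_repr (b : OrthonormalBasis ι 𝕜 E) (x : E) :
    ∑ i, ‖b.repr x i‖ ^ 2 = ‖x‖ ^ 2 := by
  simpa only [b.repr_apply_apply] using b.sum_sq_norm_inner_right x

theorem finrank_span_image (b : OrthonormalBasis ι 𝕜 E) (s : Set ι) :
    finrank 𝕜 (span 𝕜 (b '' s)) = Nat.card s := by
  classical
  rw [Set.image_eq_range, finrank_span_eq_card (b := fun i : s => b i)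
    (b.orthonormal.linearIndependent.comp _ Subtype.val_injective), Nat.card_eq_fintype_card]

end OrthonormalBasis

namespace Matrix.IsHermitian

variable {𝕜 n : Type*} [RCLike 𝕜] [Fintype n] [DecidableEq n] {A : Matrix n n 𝕜}
  (hA : A.IsHermitian)

theorem repr_toEuclideanLin_apply (x : EuclideanSpace 𝕜 n) (i : n) :
    hA.eigenvectorBasis.repr (toEuclideanLin A x) i =
      hA.eigenvalues i * hA.eigenvectorBasis.repr x i := by
  have hb : toEuclideanLin A (hA.eigenvectorBasis i) =
      (hA.eigenvalues i : 𝕜) • hA.eigenvectorBasis i := by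
    apply WithLp.ofLp_injective 2
    simpa only [toLpLin_apply, WithLp.ofLp_smul, RCLike.real_smul_eq_coe_smul (K := 𝕜)] using
      hA.mulVec_eigenvectorBasis i
  rw [OrthonormalBasis.repr_apply_apply, OrthonormalBasis.repr_apply_apply,
    ← isSymmetric_toEuclideanLin_iff.2 hA, hb, inner_smul_left, RCLike.conj_ofReal]

theorem re_inner_toEuclideanLin (x : EuclideanSpace 𝕜 n) :
    RCLike.re ⟪x, toEuclideanLin A x⟫_𝕜 =
      ∑ i, hA.eigenvalues i * ‖hA.eigenvectorBasis.repr x i‖ ^ 2 := by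
  rw [← hA.eigenvectorBasis.repr.inner_map_map, PiLp.inner_apply, map_sum]
  refine Finset.sum_congr rfl fun i _ => ?_
  rw [hA.repr_toEuclideanLin_apply, RCLike.inner_apply, mul_assoc, RCLike.mul_conj]
  norm_cast

def spectralSubspace (p : ℝ → Prop) : Submodule 𝕜 (EuclideanSpace 𝕜 n) :=
  span 𝕜 (hA.eigenvectorBasis '' {i | p (hA.eigenvalues i)})

theorem finrank_spectralSubspace (p : ℝ → Prop) :
    finrank 𝕜 (hA.spectralSubspace p) = Nat.card {i // p (hA.eigenvalues i)} :=
  hA.eigenvectorBasis.finrank_span_image _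

theorem of_repr_ne_zero_of_mem_spectralSubspace {p : ℝ → Prop} {x : EuclideanSpace 𝕜 n}
    (hx : x ∈ hA.spectralSubspace p) {i : n} (hi : hA.eigenvectorBasis.repr x i ≠ 0) :
    p (hA.eigenvalues i) :=
  by_contra fun h => hi (hA.eigenvectorBasis.repr_eq_zero_of_mem_span_image hx h)

theorem re_inner_toEuclideanLin_lt_of_mem_spectralSubspace {lam : ℝ} {x : EuclideanSpace 𝕜 n}
    (hx : x ∈ hA.spectralSubspace (· < lam)) (hx0 : x ≠ 0) :
    RCLike.re ⟪x, toEuclideanLin A x⟫_𝕜 < lam * ‖x‖ ^ 2 := by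
  rw [hA.re_inner_toEuclideanLin, ← hA.eigenvectorBasis.sum_sq_norm_repr, Finset.mul_sum]
  set b := hA.eigenvectorBasis
  obtain ⟨i₀, hi₀⟩ : ∃ i, b.repr x i ≠ 0 := by
    by_contra! h
    exact hx0 (b.repr.map_eq_zero_iff.1 (by ext i; exact h i))
  refine Finset.sum_lt_sum (fun i _ => ?_) ⟨i₀, Finset.mem_univ _, ?_⟩
  · by_cases hi : b.repr x i = 0
    · simp [hi]
    · exact mul_le_mul_of_nonneg_right
        (hA.of_repr_ne_zero_of_mem_spectralSubspace hx hi).le (by positivity)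
  · exact mul_lt_mul_of_pos_right (hA.of_repr_ne_zero_of_mem_spectralSubspace hx hi₀)
      (by positivity)

theorem le_re_inner_toEuclideanLin_of_mem_spectralSubspace {lam : ℝ} {x : EuclideanSpace 𝕜 n}
    (hx : x ∈ hA.spectralSubspace (lam ≤ ·)) :
    lam * ‖x‖ ^ 2 ≤ RCLike.re ⟪x, toEuclideanLin A x⟫_𝕜 := by
  rw [hA.re_inner_toEuclideanLin, ← hA.eigenvectorBasis.sum_sq_norm_repr, Finset.mul_sum]
  set b := hA.eigenvectorBasis
  refine Finset.sum_le_sum fun i _ => ?_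
  by_cases hi : b.repr x i = 0
  · simp [hi]
  · exact mul_le_mul_of_nonneg_right
      (hA.of_repr_ne_zero_of_mem_spectralSubspace hx hi) (by positivity)

theorem finrank_le_card_eigenvalues_lt {lam : ℝ} (W : Submodule 𝕜 (EuclideanSpace 𝕜 n))
    (hW : ∀ x ∈ W, x ≠ 0 → RCLike.re ⟪x, toEuclideanLin A x⟫_𝕜 < lam * ‖x‖ ^ 2) :
    finrank 𝕜 W ≤ Nat.card {i // hA.eigenvalues i < lam} := by
  have hdisj : Disjoint W (hA.spectralSubspace (lam ≤ ·)) := by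
    refine disjoint_def.2 fun x hxW hxV => ?_
    by_contra hx0
    exact (hW x hxW hx0).not_ge (hA.le_re_inner_toEuclideanLin_of_mem_spectralSubspace hxV)
  have hdim := finrank_add_finrank_le_of_disjoint hdisj
  rw [finrank_spectralSubspace, finrank_euclideanSpace] at hdim
  have hcard : Nat.card {i // lam ≤ hA.eigenvalues i} =
      Fintype.card n - Nat.card {i // hA.eigenvalues i < lam} := by
    simp only [Nat.card_eq_fintype_card, ← not_lt, Fintype.card_subtype_compl]
  have hle : Nat.card {i // hA.eigenvalues i < lam} ≤ Fintype.card n :=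
    Nat.card_eq_fintype_card (α := n) ▸ Finite.card_subtype_le _
  omega

end Matrix.IsHermitian

theorem Matrix.PosSemidef.re_inner_toEuclideanLin_le {𝕜 n : Type*} [RCLike 𝕜] [Fintype n]
    [DecidableEq n] {A B : Matrix n n 𝕜} (h : (B - A).PosSemidef) (x : EuclideanSpace 𝕜 n) :
    RCLike.re ⟪x, toEuclideanLin A x⟫_𝕜 ≤ RCLike.re ⟪x, toEuclideanLin B x⟫_𝕜 := by
  have := (isPositive_toEuclideanLin_iff.2 h).re_inner_nonneg_right x
  rw [map_sub, LinearMap.sub_apply, inner_sub_right, map_sub] at this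
  linarith

/-- Let `S` and `T` be Hermitian `n×n` complex matrices with `S ≤ T` in the
Loewner order (i.e. `T − S` is positive semidefinite). Then for every `λ ∈ ℝ`, the number of
eigenvalues of `T` strictly below `λ` is at most the number of eigenvalues of `S` strictly
below `λ`: `N(T,λ) ≤ N(S,λ)`. -/
theorem counting_function_loewner_monotone {n : ℕ}
    (S T : Matrix (Fin n) (Fin n) ℂ) (hS : S.IsHermitian) (hT : T.IsHermitian)
    (hST : (T - S).PosSemidef) (lam : ℝ) :
    Nat.card {i // hT.eigenvalues i < lam} ≤ Nat.card {i // hS.eigenvalues i < lam} := by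
  have hS_lt : ∀ x ∈ hT.spectralSubspace (· < lam), x ≠ 0 →
      RCLike.re ⟪x, Matrix.toEuclideanLin S x⟫_ℂ < lam * ‖x‖ ^ 2 := fun x hx hx0 =>
    (hST.re_inner_toEuclideanLin_le x).trans_lt
      (hT.re_inner_toEuclideanLin_lt_of_mem_spectralSubspace hx hx0)
  calc Nat.card {i // hT.eigenvalues i < lam}
      = finrank ℂ (hT.spectralSubspace (· < lam)) :=
        (hT.finrank_spectralSubspace (· < lam)).symm
    _ ≤ Nat.card {i // hS.eigenvalues i < lam} := hS.finrank_le_card_eigenvalues_lt _ hS_lt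

end
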